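/- arXiv:2103.11667 — 2 statements merged into one kernel-verified Lean document; each statement's English description precedes it below -/
import Mathlib

section
/- The variables U = √|Γ₁|(x₁x₂ + y₁y₂)/(sgn(Γ₁Γ₂)√(x₂²+y₂²)) and V = √|Γ₁|(x₂y₁ - x₁y₂)/(sgn(Γ₁Γ₂)√(x₂²+y₂²)) are canonical with respect to the Poisson bracket {zₖ, z̄ⱼ} = -(2i/Γₖ)δₖⱼ: one has {U,V} = sgn(Γ₁), {U,U} = {V,V} = 0. -/
/-! `U + iV = κ z₁ z̄₂ / |z₂|` with `κ = √|Γ₁| / sgn(Γ₁Γ₂)`, so `(U, V)` is `κ (x₁, y₁)` rotated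
by `-arg z₂`. The `z₁`-block of the bracket is therefore `κ² / Γ₁ = |Γ₁| / Γ₁ = sgn Γ₁`. Since
`U` and `V` are homogeneous of degree zero in `z₂`, their `z₂`-gradients are orthogonal to
`(x₂, y₂)`, hence parallel, and the `z₂`-block vanishes. -/

open Real

/-- The Poisson bracket corresponding to {z_k, conj z_j} = -(2i/Γ_k) δ_{kj},
i.e. {x_k, y_k} = 1/Γ_k. -/
noncomputable def pbracket (Γ₁ Γ₂ : ℝ) (A B : ℝ → ℝ → ℝ → ℝ → ℝ)
    (x₁ y₁ x₂ y₂ : ℝ) : ℝ :=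
  (1/Γ₁) * (deriv (fun s => A s y₁ x₂ y₂) x₁ * deriv (fun s => B x₁ s x₂ y₂) y₁
          - deriv (fun s => A x₁ s x₂ y₂) y₁ * deriv (fun s => B s y₁ x₂ y₂) x₁)
  + (1/Γ₂) * (deriv (fun s => A x₁ y₁ s y₂) x₂ * deriv (fun s => B x₁ y₁ x₂ s) y₂
          - deriv (fun s => A x₁ y₁ x₂ s) y₂ * deriv (fun s => B x₁ y₁ s y₂) x₂)

/-- The variable U of the reduction. -/
noncomputable def Ured (Γ₁ Γ₂ : ℝ) (x₁ y₁ x₂ y₂ : ℝ) : ℝ :=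
  Real.sqrt |Γ₁| * (x₁*x₂ + y₁*y₂) / (Real.sign (Γ₁*Γ₂) * Real.sqrt (x₂^2 + y₂^2))

/-- The variable V of the reduction. -/
noncomputable def Vred (Γ₁ Γ₂ : ℝ) (x₁ y₁ x₂ y₂ : ℝ) : ℝ :=
  Real.sqrt |Γ₁| * (x₂*y₁ - x₁*y₂) / (Real.sign (Γ₁*Γ₂) * Real.sqrt (x₂^2 + y₂^2))

theorem pbracket_self (Γ₁ Γ₂ : ℝ) (A : ℝ → ℝ → ℝ → ℝ → ℝ) (x₁ y₁ x₂ y₂ : ℝ) :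
    pbracket Γ₁ Γ₂ A A x₁ y₁ x₂ y₂ = 0 := by
  rw [pbracket]; ring

theorem Real.abs_div_self (r : ℝ) : |r| / r = Real.sign r := by
  rcases lt_trichotomy r 0 with h | rfl | h
  · rw [Real.sign_of_neg h, abs_of_neg h, neg_div, div_self h.ne]
  · simp
  · rw [Real.sign_of_pos h, abs_of_pos h, div_self h.ne']

theorem Real.sign_sq_of_ne_zero {r : ℝ} (h : r ≠ 0) : Real.sign r ^ 2 = 1 := by
  rcases Real.sign_apply_eq_of_ne_zero r h with h | h <;> rw [h] <;> norm_num

theorem hasDerivAt_affine_div_sqrt_sq_add_sq (p q w v : ℝ) (h : 0 < v ^ 2 + w ^ 2) :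
    HasDerivAt (fun s => (p * s + q) / √(s ^ 2 + w ^ 2))
      ((p * w ^ 2 - q * v) / √(v ^ 2 + w ^ 2) ^ 3) v := by
  have hr : √(v ^ 2 + w ^ 2) ≠ 0 := (Real.sqrt_pos.mpr h).ne'
  have hnorm : HasDerivAt (fun s => √(s ^ 2 + w ^ 2)) (2 * v / (2 * √(v ^ 2 + w ^ 2))) v := by
    simpa using ((hasDerivAt_pow 2 v).add_const (w ^ 2)).sqrt h.ne'
  refine ((((hasDerivAt_id' v).const_mul p).add_const q).fun_div hnorm hr).congr_deriv ?_
  field_simp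
  rw [Real.sq_sqrt h.le]
  ring

section PartialDerivatives

variable (Γ₁ Γ₂ x₁ y₁ x₂ y₂ : ℝ)

theorem hasDerivAt_Ured_x₁ :
    HasDerivAt (fun s => Ured Γ₁ Γ₂ s y₁ x₂ y₂)
      (√|Γ₁| * x₂ / (Real.sign (Γ₁ * Γ₂) * √(x₂ ^ 2 + y₂ ^ 2))) x₁ := by
  simpa [Ured] using (((hasDerivAt_id' x₁).mul_const x₂).add_const (y₁ * y₂)).const_mul √|Γ₁|
    |>.div_const (Real.sign (Γ₁ * Γ₂) * √(x₂ ^ 2 + y₂ ^ 2))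

theorem hasDerivAt_Ured_y₁ :
    HasDerivAt (fun s => Ured Γ₁ Γ₂ x₁ s x₂ y₂)
      (√|Γ₁| * y₂ / (Real.sign (Γ₁ * Γ₂) * √(x₂ ^ 2 + y₂ ^ 2))) y₁ := by
  simpa [Ured] using (((hasDerivAt_id' y₁).mul_const y₂).const_add (x₁ * x₂)).const_mul √|Γ₁|
    |>.div_const (Real.sign (Γ₁ * Γ₂) * √(x₂ ^ 2 + y₂ ^ 2))

theorem hasDerivAt_Vred_x₁ :
    HasDerivAt (fun s => Vred Γ₁ Γ₂ s y₁ x₂ y₂)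
      (-(√|Γ₁| * y₂ / (Real.sign (Γ₁ * Γ₂) * √(x₂ ^ 2 + y₂ ^ 2)))) x₁ := by
  simpa [Vred, neg_div] using
    (((hasDerivAt_id' x₁).mul_const y₂).const_sub (x₂ * y₁)).const_mul √|Γ₁|
      |>.div_const (Real.sign (Γ₁ * Γ₂) * √(x₂ ^ 2 + y₂ ^ 2))

theorem hasDerivAt_Vred_y₁ :
    HasDerivAt (fun s => Vred Γ₁ Γ₂ x₁ s x₂ y₂)
      (√|Γ₁| * x₂ / (Real.sign (Γ₁ * Γ₂) * √(x₂ ^ 2 + y₂ ^ 2))) y₁ := by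
  simpa [Vred] using (((hasDerivAt_id' y₁).const_mul x₂).sub_const (x₁ * y₂)).const_mul √|Γ₁|
    |>.div_const (Real.sign (Γ₁ * Γ₂) * √(x₂ ^ 2 + y₂ ^ 2))

variable {x₂ y₂} (hz₂ : 0 < x₂ ^ 2 + y₂ ^ 2)
include hz₂

theorem hasDerivAt_Ured_x₂ :
    HasDerivAt (fun s => Ured Γ₁ Γ₂ x₁ y₁ s y₂)
      (√|Γ₁| * (y₂ * (x₁ * y₂ - x₂ * y₁)) / (Real.sign (Γ₁ * Γ₂) * √(x₂ ^ 2 + y₂ ^ 2) ^ 3)) x₂ := by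
  have e : (fun s => Ured Γ₁ Γ₂ x₁ y₁ s y₂) = fun s =>
      √|Γ₁| / Real.sign (Γ₁ * Γ₂) * ((x₁ * s + y₁ * y₂) / √(s ^ 2 + y₂ ^ 2)) := by
    funext s; simp only [Ured]; ring
  rw [e]
  exact ((hasDerivAt_affine_div_sqrt_sq_add_sq _ _ _ _ hz₂).const_mul _).congr_deriv (by ring)

theorem hasDerivAt_Ured_y₂ :
    HasDerivAt (fun s => Ured Γ₁ Γ₂ x₁ y₁ x₂ s)
      (√|Γ₁| * (x₂ * (x₂ * y₁ - x₁ * y₂)) / (Real.sign (Γ₁ * Γ₂) * √(x₂ ^ 2 + y₂ ^ 2) ^ 3)) y₂ := by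
  have e : (fun s => Ured Γ₁ Γ₂ x₁ y₁ x₂ s) = fun s =>
      √|Γ₁| / Real.sign (Γ₁ * Γ₂) * ((y₁ * s + x₁ * x₂) / √(s ^ 2 + x₂ ^ 2)) := by
    funext s; simp only [Ured, add_comm (x₂ ^ 2)]; ring
  rw [e, add_comm (x₂ ^ 2)]
  exact ((hasDerivAt_affine_div_sqrt_sq_add_sq _ _ _ _ (by linarith)).const_mul _).congr_deriv
    (by ring)

theorem hasDerivAt_Vred_x₂ :
    HasDerivAt (fun s => Vred Γ₁ Γ₂ x₁ y₁ s y₂)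
      (√|Γ₁| * (y₂ * (x₁ * x₂ + y₁ * y₂)) / (Real.sign (Γ₁ * Γ₂) * √(x₂ ^ 2 + y₂ ^ 2) ^ 3)) x₂ := by
  have e : (fun s => Vred Γ₁ Γ₂ x₁ y₁ s y₂) = fun s =>
      √|Γ₁| / Real.sign (Γ₁ * Γ₂) * ((y₁ * s + -(x₁ * y₂)) / √(s ^ 2 + y₂ ^ 2)) := by
    funext s; simp only [Vred]; ring
  rw [e]
  exact ((hasDerivAt_affine_div_sqrt_sq_add_sq _ _ _ _ hz₂).const_mul _).congr_deriv (by ring)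

theorem hasDerivAt_Vred_y₂ :
    HasDerivAt (fun s => Vred Γ₁ Γ₂ x₁ y₁ x₂ s)
      (-(√|Γ₁| * (x₂ * (x₁ * x₂ + y₁ * y₂)) / (Real.sign (Γ₁ * Γ₂) * √(x₂ ^ 2 + y₂ ^ 2) ^ 3)))
      y₂ := by
  have e : (fun s => Vred Γ₁ Γ₂ x₁ y₁ x₂ s) = fun s =>
      √|Γ₁| / Real.sign (Γ₁ * Γ₂) * ((-x₁ * s + x₂ * y₁) / √(s ^ 2 + x₂ ^ 2)) := by
    funext s; simp only [Vred, add_comm (x₂ ^ 2)]; ring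
  rw [e, add_comm (x₂ ^ 2)]
  exact ((hasDerivAt_affine_div_sqrt_sq_add_sq _ _ _ _ (by linarith)).const_mul _).congr_deriv
    (by ring)

end PartialDerivatives

section Jacobians

variable {Γ₁ Γ₂ x₂ y₂ : ℝ} (x₁ y₁ : ℝ) (hz₂ : 0 < x₂ ^ 2 + y₂ ^ 2)
include hz₂

theorem jacobian_z₁_Ured_Vred (hΓ : Γ₁ * Γ₂ ≠ 0) :
    deriv (fun s => Ured Γ₁ Γ₂ s y₁ x₂ y₂) x₁ * deriv (fun s => Vred Γ₁ Γ₂ x₁ s x₂ y₂) y₁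
      - deriv (fun s => Ured Γ₁ Γ₂ x₁ s x₂ y₂) y₁ * deriv (fun s => Vred Γ₁ Γ₂ s y₁ x₂ y₂) x₁
      = |Γ₁| := by
  rw [(hasDerivAt_Ured_x₁ ..).deriv, (hasDerivAt_Vred_y₁ ..).deriv,
    (hasDerivAt_Ured_y₁ ..).deriv, (hasDerivAt_Vred_x₁ ..).deriv]
  have hK : Real.sign (Γ₁ * Γ₂) ^ 2 = 1 := Real.sign_sq_of_ne_zero hΓ
  have hC : √|Γ₁| ^ 2 = |Γ₁| := Real.sq_sqrt (abs_nonneg Γ₁)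
  have hr : √(x₂ ^ 2 + y₂ ^ 2) ^ 2 = x₂ ^ 2 + y₂ ^ 2 := Real.sq_sqrt hz₂.le
  have hr₀ : √(x₂ ^ 2 + y₂ ^ 2) ≠ 0 := (Real.sqrt_pos.mpr hz₂).ne'
  have hK₀ : Real.sign (Γ₁ * Γ₂) ≠ 0 := by simpa [Real.sign_eq_zero_iff] using hΓ
  field_simp
  linear_combination (x₂ ^ 2 + y₂ ^ 2) * hC - |Γ₁| * Real.sign (Γ₁ * Γ₂) ^ 2 * hr
    - |Γ₁| * (x₂ ^ 2 + y₂ ^ 2) * hK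

theorem jacobian_z₂_Ured_Vred :
    deriv (fun s => Ured Γ₁ Γ₂ x₁ y₁ s y₂) x₂ * deriv (fun s => Vred Γ₁ Γ₂ x₁ y₁ x₂ s) y₂
      - deriv (fun s => Ured Γ₁ Γ₂ x₁ y₁ x₂ s) y₂ * deriv (fun s => Vred Γ₁ Γ₂ x₁ y₁ s y₂) x₂
      = 0 := by
  rw [(hasDerivAt_Ured_x₂ Γ₁ Γ₂ x₁ y₁ hz₂).deriv, (hasDerivAt_Vred_y₂ Γ₁ Γ₂ x₁ y₁ hz₂).deriv,
    (hasDerivAt_Ured_y₂ Γ₁ Γ₂ x₁ y₁ hz₂).deriv, (hasDerivAt_Vred_x₂ Γ₁ Γ₂ x₁ y₁ hz₂).deriv]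
  ring

end Jacobians

theorem UV_canonical_general (Γ₁ Γ₂ : ℝ) (hΓ₁ : Γ₁ ≠ 0) (hΓ₂ : Γ₂ ≠ 0)
    (x₁ y₁ x₂ y₂ : ℝ)
    (hz₂ : 0 < x₂^2 + y₂^2) :
    pbracket Γ₁ Γ₂ (Ured Γ₁ Γ₂) (Vred Γ₁ Γ₂) x₁ y₁ x₂ y₂ = Real.sign Γ₁
    ∧ pbracket Γ₁ Γ₂ (Ured Γ₁ Γ₂) (Ured Γ₁ Γ₂) x₁ y₁ x₂ y₂ = 0
    ∧ pbracket Γ₁ Γ₂ (Vred Γ₁ Γ₂) (Vred Γ₁ Γ₂) x₁ y₁ x₂ y₂ = 0 := by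
  refine ⟨?_, pbracket_self .., pbracket_self ..⟩
  rw [pbracket, jacobian_z₁_Ured_Vred x₁ y₁ hz₂ (mul_ne_zero hΓ₁ hΓ₂),
    jacobian_z₂_Ured_Vred x₁ y₁ hz₂, mul_zero, add_zero, one_div_mul_eq_div, Real.abs_div_self]

/-- The variables U, V are canonical: {U,V} = sgn Γ₁, {U,U} = {V,V} = 0
on the phase space (where z₂ ≠ 0). -/
theorem UV_canonical (Γ₁ Γ₂ : ℝ) (hΓ₁ : Γ₁ ≠ 0) (hΓ₂ : Γ₂ ≠ 0)
    (x₁ y₁ x₂ y₂ : ℝ)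
    (h₁ : x₁^2 + y₁^2 < 1) (h₂ : x₂^2 + y₂^2 < 1)
    (hne : (x₁, y₁) ≠ (x₂, y₂)) (hz₂ : 0 < x₂^2 + y₂^2) :
    pbracket Γ₁ Γ₂ (Ured Γ₁ Γ₂) (Vred Γ₁ Γ₂) x₁ y₁ x₂ y₂ = Real.sign Γ₁
    ∧ pbracket Γ₁ Γ₂ (Ured Γ₁ Γ₂) (Ured Γ₁ Γ₂) x₁ y₁ x₂ y₂ = 0
    ∧ pbracket Γ₁ Γ₂ (Vred Γ₁ Γ₂) (Vred Γ₁ Γ₂) x₁ y₁ x₂ y₂ = 0 :=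
  UV_canonical_general Γ₁ Γ₂ hΓ₁ hΓ₂ x₁ y₁ x₂ y₂ hz₂
end

section
/- Under the reduction substitution, the squared distance between the vortices expressed in reduced variables satisfies |z₁ - z₂|² = (u/√|Γ₁| · sgn Γ₁ - sgn Γ₂ · √(sgn(Γ₁Γ₂)[f sgn Γ₁ - (u²+v²)])/√|Γ₂|)² + v²/|Γ₁|, independent of the rotation angle α. -/
/-!
Write `ρ = √(sgn(Γ₁Γ₂)[f sgn Γ₁ - (u² + v²)])`. The substitution reads
`z₁ = (sgn(Γ₁Γ₂)/√|Γ₁|) e^{iα} (u + iv)` and `z₂ = (ρ/√|Γ₂|) e^{iα}`, so the common rotation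
`e^{iα}` drops out of `|z₁ - z₂|`. In what remains, the real part may be multiplied by the sign
`sgn Γ₂`, and `sgn Γ₂ · sgn(Γ₁Γ₂) = sgn Γ₁` because `sgn Γ₂² = 1`.
-/

open Real

namespace Real

theorem sign_mul (a b : ℝ) : sign (a * b) = sign a * sign b := by
  rcases lt_trichotomy a 0 with ha | ha | ha <;> rcases lt_trichotomy b 0 with hb | hb | hb <;>
    simp [ha, hb, sign_of_neg, sign_of_pos, mul_pos_of_neg_of_neg, mul_neg_of_neg_of_pos,
      mul_neg_of_pos_of_neg]

theorem sign_sq_of_ne_zero_s7 {r : ℝ} (hr : r ≠ 0) : sign r ^ 2 = 1 := by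
  rcases sign_apply_eq_of_ne_zero r hr with h | h <;> simp [h]

end Real

theorem rotate_sub_rotate_sq_add_sq (k u v t α : ℝ) :
    (k * (u * cos α - v * sin α) - cos α * t) ^ 2 + (k * (u * sin α + v * cos α) - sin α * t) ^ 2
      = (k * u - t) ^ 2 + (k * v) ^ 2 := by
  linear_combination ((k * u - t) ^ 2 + (k * v) ^ 2) * sin_sq_add_cos_sq α

theorem sign_mul_div_sqrt_abs_sub_sq_add_sq {Γ₁ Γ₂ : ℝ} (hΓ₁ : Γ₁ ≠ 0) (hΓ₂ : Γ₂ ≠ 0)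
    (u v t : ℝ) :
    (sign (Γ₁ * Γ₂) / √|Γ₁| * u - t) ^ 2 + (sign (Γ₁ * Γ₂) / √|Γ₁| * v) ^ 2
      = (u / √|Γ₁| * sign Γ₁ - sign Γ₂ * t) ^ 2 + v ^ 2 / |Γ₁| := by
  have hsgn : sign (Γ₁ * Γ₂) ^ 2 = 1 := sign_sq_of_ne_zero_s7 (mul_ne_zero hΓ₁ hΓ₂)
  have hsgn₂ : sign Γ₂ ^ 2 = 1 := sign_sq_of_ne_zero_s7 hΓ₂
  have hv : (sign (Γ₁ * Γ₂) / √|Γ₁| * v) ^ 2 = v ^ 2 / |Γ₁| := by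
    rw [div_mul_eq_mul_div, div_pow, mul_pow, hsgn, one_mul, sq_sqrt (abs_nonneg Γ₁)]
  rw [hv, Real.sign_mul]
  linear_combination (sign Γ₁ ^ 2 * u ^ 2 / √|Γ₁| ^ 2 - t ^ 2) * hsgn₂

theorem reduction_substitution_distance_general (Γ₁ Γ₂ f u v α : ℝ)
    (hΓ₁ : Γ₁ ≠ 0) (hΓ₂ : Γ₂ ≠ 0)
    (x₁ y₁ x₂ y₂ : ℝ)
    (hx₁ : x₁ = Real.sign (Γ₁*Γ₂) / Real.sqrt |Γ₁| * (u * Real.cos α - v * Real.sin α))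
    (hy₁ : y₁ = Real.sign (Γ₁*Γ₂) / Real.sqrt |Γ₁| * (u * Real.sin α + v * Real.cos α))
    (hx₂ : x₂ = Real.cos α / Real.sqrt |Γ₂|
      * Real.sqrt (Real.sign (Γ₁*Γ₂) * (f * Real.sign Γ₁ - (u^2 + v^2))))
    (hy₂ : y₂ = Real.sin α / Real.sqrt |Γ₂|
      * Real.sqrt (Real.sign (Γ₁*Γ₂) * (f * Real.sign Γ₁ - (u^2 + v^2)))) :
    (x₁ - x₂)^2 + (y₁ - y₂)^2
      = (u / Real.sqrt |Γ₁| * Real.sign Γ₁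
          - Real.sign Γ₂ * Real.sqrt (Real.sign (Γ₁*Γ₂) * (f * Real.sign Γ₁ - (u^2 + v^2)))
              / Real.sqrt |Γ₂|)^2
        + v^2 / |Γ₁| := by
  subst hx₁ hy₁ hx₂ hy₂
  rw [mul_div_assoc, ← sign_mul_div_sqrt_abs_sub_sq_add_sq hΓ₁ hΓ₂,
    ← rotate_sub_rotate_sq_add_sq _ _ _ _ α]
  ring

/-- Under the reduction substitution, the squared distance between the vortices
equals (u sgn Γ₁/√|Γ₁| - sgn Γ₂ √(sgn(Γ₁Γ₂)[f sgn Γ₁ - (u²+v²)])/√|Γ₂|)² + v²/|Γ₁|,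
independent of the rotation angle α. -/
theorem reduction_substitution_distance (Γ₁ Γ₂ f u v α : ℝ)
    (hΓ₁ : Γ₁ ≠ 0) (hΓ₂ : Γ₂ ≠ 0)
    (hrad : 0 ≤ Real.sign (Γ₁*Γ₂) * (f * Real.sign Γ₁ - (u^2 + v^2)))
    (x₁ y₁ x₂ y₂ : ℝ)
    (hx₁ : x₁ = Real.sign (Γ₁*Γ₂) / Real.sqrt |Γ₁| * (u * Real.cos α - v * Real.sin α))
    (hy₁ : y₁ = Real.sign (Γ₁*Γ₂) / Real.sqrt |Γ₁| * (u * Real.sin α + v * Real.cos α))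
    (hx₂ : x₂ = Real.cos α / Real.sqrt |Γ₂|
      * Real.sqrt (Real.sign (Γ₁*Γ₂) * (f * Real.sign Γ₁ - (u^2 + v^2))))
    (hy₂ : y₂ = Real.sin α / Real.sqrt |Γ₂|
      * Real.sqrt (Real.sign (Γ₁*Γ₂) * (f * Real.sign Γ₁ - (u^2 + v^2)))) :
    (x₁ - x₂)^2 + (y₁ - y₂)^2
      = (u / Real.sqrt |Γ₁| * Real.sign Γ₁
          - Real.sign Γ₂ * Real.sqrt (Real.sign (Γ₁*Γ₂) * (f * Real.sign Γ₁ - (u^2 + v^2)))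
              / Real.sqrt |Γ₂|)^2
        + v^2 / |Γ₁| :=
  reduction_substitution_distance_general Γ₁ Γ₂ f u v α hΓ₁ hΓ₂ x₁ y₁ x₂ y₂ hx₁ hy₁ hx₂ hy₂
end
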